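/- arXiv:2508.04456 — 3 statements merged into one kernel-verified Lean document; each statement's English description precedes it below -/
import Mathlib

section
/- Growth-rate comparison lemma: Let α < β and let z : [α, β] → ℝ be twice continuously differentiable with z'(a) > 0 for all a, and define m(a) := exp(∫_α^a max(0, z''(s)/z'(s)) ds). Then for every continuously differentiable function u : [α, β] → (0, ∞) such that u is non-decreasing and u/z' is non-decreasing, the ratio u/m is non-decreasing on [α, β]; in particular u(a)·m(β) ≤ u(β)·m(a) for all a ∈ [α, β]. -/
/- Growth-rate comparison lemma. -/

open Set intervalIntegral

noncomputable section

/-- The minimal growth envelope `m(a) = exp (∫_α^a max 0 (z''/z'))`. -/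
def mEnv (α : ℝ) (z : ℝ → ℝ) (a : ℝ) : ℝ :=
  Real.exp (∫ s in α..a, max 0 (deriv (deriv z) s / deriv z s))

/-- A function monotone on `Icc α β` with a derivative at an interior point has
nonnegative derivative there. -/
lemma aux_deriv_nonneg {f : ℝ → ℝ} {α β x f' : ℝ}
    (hf : MonotoneOn f (Icc α β)) (hx : x ∈ Ioo α β) (hd : HasDerivAt f f' x) : 0 ≤ f' := by
  have h1 : Filter.Tendsto (slope f x) (nhdsWithin x (Ioi x)) (nhds f') := by
    have h2 := (hd.hasDerivWithinAt (s := Ioi x))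
    rw [hasDerivWithinAt_iff_tendsto_slope,
      Set.diff_singleton_eq_self (notMem_Ioi.mpr le_rfl)] at h2
    exact h2
  refine ge_of_tendsto h1 ?_
  filter_upwards [Ioc_mem_nhdsGT_of_mem ⟨le_rfl, hx.2⟩] with y hy
  rw [slope_def_field]
  apply div_nonneg
  · exact sub_nonneg.mpr (hf ⟨hx.1.le, hx.2.le⟩ ⟨(hx.1.trans hy.1).le, hy.2⟩ hy.1.le)
  · exact sub_nonneg.mpr hy.1.le

theorem growth_rate_comparison
    (α β : ℝ) (hαβ : α < β) (z : ℝ → ℝ)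
    (hz : ContDiffOn ℝ 2 z (Icc α β))
    (hz' : ∀ a ∈ Icc α β, 0 < deriv z a)
    (u : ℝ → ℝ)
    (hu : ContDiffOn ℝ 1 u (Icc α β))
    (hupos : ∀ a ∈ Icc α β, 0 < u a)
    (humono : MonotoneOn u (Icc α β))
    (hratio : MonotoneOn (fun a => u a / deriv z a) (Icc α β)) :
    MonotoneOn (fun a => u a / mEnv α z a) (Icc α β) ∧
    ∀ a ∈ Icc α β, u a * mEnv α z β ≤ u β * mEnv α z a := by
  have hud : UniqueDiffOn ℝ (Icc α β) := uniqueDiffOn_Icc hαβ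
  -- z is differentiable (fully) on Icc, since deriv z ≠ 0 there
  have hzdiff : ∀ x ∈ Icc α β, DifferentiableAt ℝ z x := by
    intro x hx
    by_contra h
    have := deriv_zero_of_not_differentiableAt h
    linarith [hz' x hx]
  set z1 : ℝ → ℝ := derivWithin z (Icc α β) with hz1def
  have hz1eq : ∀ x ∈ Icc α β, z1 x = deriv z x := fun x hx =>
    (hzdiff x hx).derivWithin (hud x hx)
  have hz1pos : ∀ x ∈ Icc α β, 0 < z1 x := fun x hx => (hz1eq x hx).symm ▸ hz' x hx
  have hz1cd : ContDiffOn ℝ 1 z1 (Icc α β) := hz.derivWithin hud (by norm_num)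
  have hz1cont : ContinuousOn z1 (Icc α β) := hz1cd.continuousOn
  set z2 : ℝ → ℝ := derivWithin z1 (Icc α β) with hz2def
  have hz2cont : ContinuousOn z2 (Icc α β) := hz1cd.continuousOn_derivWithin hud le_rfl
  -- continuous projection onto Icc
  set p : ℝ → ℝ := fun s => max α (min β s) with hpdef
  have hpcont : Continuous p := continuous_const.max (continuous_const.min continuous_id)
  have hpI : ∀ s, p s ∈ Icc α β := fun s =>
    ⟨le_max_left _ _, max_le hαβ.le (min_le_left _ _)⟩
  have hpid : ∀ s ∈ Icc α β, p s = s := fun s hs => by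
    simp [hpdef, min_eq_right hs.2, max_eq_right hs.1]
  set G : ℝ → ℝ := fun s => max 0 (z2 (p s) / z1 (p s)) with hGdef
  have hGcont : Continuous G :=
    continuous_const.max ((hz2cont.comp_continuous hpcont hpI).div
      (hz1cont.comp_continuous hpcont hpI) fun s => (hz1pos _ (hpI s)).ne')
  -- agreement of the integrands on the open interval
  have hGeq : ∀ x ∈ Ioo α β, max 0 (deriv (deriv z) x / deriv z x) = G x := by
    intro x hx
    have hxI : x ∈ Icc α β := Ioo_subset_Icc_self hx
    have h1 : deriv (deriv z) x = z2 x := by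
      have hev : deriv z =ᶠ[nhds x] z1 :=
        Filter.eventuallyEq_of_mem (isOpen_Ioo.mem_nhds hx)
          (fun y hy => (hz1eq y (Ioo_subset_Icc_self hy)).symm)
      rw [hev.deriv_eq, hz2def, derivWithin_of_mem_nhds (Icc_mem_nhds hx.1 hx.2)]
    rw [hGdef]
    simp only [hpid x hxI, h1, hz1eq x hxI]
  -- rewrite the envelope with the continuous integrand G
  have hInt : ∀ a ∈ Icc α β,
      (∫ s in α..a, max 0 (deriv (deriv z) s / deriv z s)) = ∫ s in α..a, G s := by
    intro a ha
    apply intervalIntegral.integral_congr_ae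
    have hne : ∀ᵐ x : ℝ, x ≠ β := by
      rw [MeasureTheory.ae_iff]
      have : {x : ℝ | ¬x ≠ β} = {β} := by ext x; simp
      rw [this]
      exact Real.volume_singleton
    filter_upwards [hne] with x hxne hxI
    rw [Set.uIoc_of_le ha.1] at hxI
    exact hGeq x ⟨hxI.1, lt_of_le_of_ne (hxI.2.trans ha.2) hxne⟩
  have hm : ∀ a ∈ Icc α β, mEnv α z a = Real.exp (∫ s in α..a, G s) := by
    intro a ha
    unfold mEnv
    rw [hInt a ha]
  -- The auxiliary function F
  set F : ℝ → ℝ := fun a => u a * Real.exp (-∫ s in α..a, G s) with hFdef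
  have hIdiff : Differentiable ℝ fun b => ∫ s in α..b, G s := fun b =>
    ((hGcont.integral_hasStrictDerivAt α b).hasDerivAt).differentiableAt
  have hIcont : Continuous fun b => ∫ s in α..b, G s := hIdiff.continuous
  have hFmono : MonotoneOn F (Icc α β) := by
    apply monotoneOn_of_deriv_nonneg (convex_Icc α β)
    · exact hu.continuousOn.mul ((hIcont.neg.rexp).continuousOn)
    · intro x hx
      rw [interior_Icc] at hx
      have hU : DifferentiableAt ℝ u x :=
        (hu.differentiableOn one_ne_zero).differentiableAt (Icc_mem_nhds hx.1 hx.2)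
      exact (hU.mul ((hIdiff x).neg.exp)).differentiableWithinAt
    · intro x hx
      rw [interior_Icc] at hx
      have hxI : x ∈ Icc α β := Ioo_subset_Icc_self hx
      have hU : HasDerivAt u (deriv u x) x :=
        ((hu.differentiableOn one_ne_zero).differentiableAt (Icc_mem_nhds hx.1 hx.2)).hasDerivAt
      have hIx : HasDerivAt (fun b => ∫ s in α..b, G s) (G x) x :=
        (hGcont.integral_hasStrictDerivAt α x).hasDerivAt
      have hE : HasDerivAt (fun b => Real.exp (-∫ s in α..b, G s))
          (Real.exp (-∫ s in α..x, G s) * (-G x)) x := hIx.neg.exp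
      have hFd : HasDerivAt F
          (deriv u x * Real.exp (-∫ s in α..x, G s) +
            u x * (Real.exp (-∫ s in α..x, G s) * (-G x))) x := hU.mul hE
      rw [hFd.deriv]
      -- key inequality: u x * G x ≤ deriv u x
      have hu' : 0 ≤ deriv u x := aux_deriv_nonneg humono hx hU
      have hz1x : 0 < z1 x := hz1pos x hxI
      have hz1d : HasDerivAt z1 (z2 x) x := by
        have hda : DifferentiableAt ℝ z1 x :=
          (hz1cd.differentiableOn one_ne_zero).differentiableAt (Icc_mem_nhds hx.1 hx.2)
        have := hda.hasDerivAt
        rwa [show deriv z1 x = z2 x from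
          (derivWithin_of_mem_nhds (Icc_mem_nhds hx.1 hx.2)).symm] at this
      have hr1mono : MonotoneOn (fun a => u a / z1 a) (Icc α β) := by
        intro a ha b hb hab
        simp only [hz1eq a ha, hz1eq b hb]
        exact hratio ha hb hab
      have hr1d : HasDerivAt (fun a => u a / z1 a)
          ((deriv u x * z1 x - u x * z2 x) / z1 x ^ 2) x := hU.div hz1d hz1x.ne'
      have hnum : 0 ≤ deriv u x * z1 x - u x * z2 x := by
        have h0 := aux_deriv_nonneg hr1mono hx hr1d
        have h1 : 0 ≤ (deriv u x * z1 x - u x * z2 x) / z1 x ^ 2 * z1 x ^ 2 :=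
          mul_nonneg h0 (sq_nonneg _)
        rwa [div_mul_cancel₀ _ (pow_ne_zero 2 hz1x.ne')] at h1
      have hkey : u x * G x ≤ deriv u x := by
        rw [hGdef]
        simp only [hpid x hxI]
        rcases le_total (z2 x) 0 with h | h
        · rw [max_eq_left (div_nonpos_iff.mpr (Or.inr ⟨h, hz1x.le⟩))]
          simpa using hu'
        · rw [max_eq_right (div_nonneg h hz1x.le), mul_div_assoc']
          rw [div_le_iff₀ hz1x]
          linarith
      have : deriv u x * Real.exp (-∫ s in α..x, G s) +
          u x * (Real.exp (-∫ s in α..x, G s) * (-G x)) =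
          Real.exp (-∫ s in α..x, G s) * (deriv u x - u x * G x) := by ring
      rw [this]
      exact mul_nonneg (Real.exp_pos _).le (by linarith)
  -- transfer monotonicity to u / mEnv
  have hmain : MonotoneOn (fun a => u a / mEnv α z a) (Icc α β) := by
    intro a ha b hb hab
    have h := hFmono ha hb hab
    simp only [hm a ha, hm b hb, Real.exp_neg, hFdef] at h ⊢
    rw [div_eq_mul_inv, div_eq_mul_inv]
    exact h
  refine ⟨hmain, fun a ha => ?_⟩
  have hβ : β ∈ Icc α β := ⟨hαβ.le, le_rfl⟩
  have h := hmain ha hβ ha.2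
  have hma : 0 < mEnv α z a := Real.exp_pos _
  have hmb : 0 < mEnv α z β := Real.exp_pos _
  rw [div_le_div_iff₀ hma hmb] at h
  exact h
end
end

section
/- Single-crossing equal-mass comparison inequality: Let f : [0,1]² → (0, ∞) be continuous with F(a,b) := ∫_0^a ∫_0^b f(v,w) dw dv, and suppose the inverse conditional anti-hazard rate h(a,b) := (∫_0^a f(v,b) dv)/f(a,b) is strictly increasing in a and non-decreasing in b. Let ẑ_1, ẑ_2 : [0,1] → [0,1] be non-decreasing functions and a* ∈ (0,1) be such that ẑ_2(a) ≥ ẑ_1(a) for all a ≤ a*, ẑ_1(a) ≥ ẑ_2(a) for all a ≥ a*, the set {a : ẑ_1(a) ≠ ẑ_2(a)} has positive Lebesgue measure, and the masses below the two curves are equal: ∫_0^1 ∫_0^{ẑ_1(a)} f(a,b) db da = ∫_0^1 ∫_0^{ẑ_2(a)} f(a,b) db da. Then ∫_0^1 F(a, ẑ_1(a)) da > ∫_0^1 F(a, ẑ_2(a)) da. -/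
/-!
Let `b* = ẑ₁(a*) = ẑ₂(a*)`, `c = h(a*, b*)` and
`Q(a, w) = ∫₀^a f(v, w) dv - c f(a, w) = (h(a, w) - c) f(a, w)` (`antihazGap f c a w`).
Since `h` is strictly increasing in `a` and non-decreasing in `b`, `Q < 0` on
`[0, a*) × [0, b*]` and `Q > 0` on `(a*, 1] × [b*, 1]`. Monotonicity of `ẑ₂` puts the segment
between `ẑ₁(a)` and `ẑ₂(a)` in the first region when `a < a*` (where `ẑ₁(a) ≤ ẑ₂(a)`) and in
the second when `a > a*`, so `S(a) = ∫_{ẑ₂(a)}^{ẑ₁(a)} Q(a, w) dw` is nonnegative, and positive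
wherever `ẑ₁(a) ≠ ẑ₂(a)`. By Fubini, `∫₀^b Q(a, w) dw = F(a, b) - c ∫₀^b f(a, w) dw`; the
masses being equal, `∫₀¹ S` is exactly the difference of the two welfare integrals.

Everything only involves `f` on the unit square, so `f` may first be replaced by a continuous
extension to the plane.
-/

open Set MeasureTheory intervalIntegral

noncomputable section

def square : Set (ℝ × ℝ) := Icc (0:ℝ) 1 ×ˢ Icc (0:ℝ) 1

/-- The cumulative distribution `F(a,b) = ∫₀^a ∫₀^b f`. -/
def Fcdf (f : ℝ × ℝ → ℝ) (a b : ℝ) : ℝ :=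
  ∫ v in (0:ℝ)..a, ∫ w in (0:ℝ)..b, f (v, w)

/-- The inverse conditional anti-hazard rate
`h(a,b) = (∫₀^a f(v,b) dv) / f(a,b)`. -/
def antihazA (f : ℝ × ℝ → ℝ) (a b : ℝ) : ℝ :=
  (∫ v in (0:ℝ)..a, f (v, b)) / f (a, b)

theorem exists_continuous_eqOn_square {β : Type*} [TopologicalSpace β] {f : ℝ × ℝ → β}
    (hf : ContinuousOn f square) : ∃ g : ℝ × ℝ → β, Continuous g ∧ EqOn g f square := by
  let π : ℝ → ℝ := fun x => projIcc 0 1 zero_le_one x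
  have hπI (x : ℝ) : π x ∈ Icc (0:ℝ) 1 := (projIcc (0:ℝ) 1 zero_le_one x).2
  refine ⟨fun p => f (π p.1, π p.2),
    hf.comp_continuous (by fun_prop) fun p => ⟨hπI p.1, hπI p.2⟩, fun p hp => ?_⟩
  simp only [π, projIcc_of_mem _ hp.1, projIcc_of_mem _ hp.2]

theorem intervalIntegral_integral_swap {E : Type*} [NormedAddCommGroup E] [NormedSpace ℝ E]
    {f : ℝ × ℝ → E} (hf : Continuous f) (a₀ a b₀ b : ℝ) :
    (∫ v in a₀..a, ∫ w in b₀..b, f (v, w)) = ∫ w in b₀..b, ∫ v in a₀..a, f (v, w) := by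
  simp only [intervalIntegral_eq_integral_uIoc, MeasureTheory.integral_smul]
  rw [smul_comm, integral_integral_swap]
  rw [Measure.prod_restrict]
  exact (hf.continuousOn.integrableOn_compact (isCompact_uIcc.prod isCompact_uIcc)).mono_set
    (prod_mono uIoc_subset_uIcc uIoc_subset_uIcc)

theorem intervalIntegrable_comp_monotoneOn {Φ : ℝ × ℝ → ℝ} (hΦ : Continuous Φ) {z : ℝ → ℝ}
    {a b : ℝ} (hab : a ≤ b) (hz : MonotoneOn z (Icc a b)) :
    IntervalIntegrable (fun x => Φ (x, z x)) volume a b := by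
  rw [intervalIntegrable_iff_integrableOn_Icc_of_le hab]
  obtain ⟨C, hC⟩ := (isCompact_Icc.prod (isCompact_Icc (a := z a) (b := z b)))
    |>.exists_bound_of_continuousOn hΦ.continuousOn
  refine .of_bound measure_Icc_lt_top (hΦ.comp_aestronglyMeasurable (aemeasurable_id.prodMk
    (aemeasurable_restrict_of_monotoneOn measurableSet_Icc hz)).aestronglyMeasurable) C ?_
  filter_upwards [ae_restrict_mem measurableSet_Icc] with x hx
  exact hC _ ⟨hx, hz (left_mem_Icc.2 hab) hx hx.1, hz hx (right_mem_Icc.2 hab) hx.2⟩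

theorem intervalIntegral_pos_of_nonneg_of_support {g : ℝ → ℝ} {a b : ℝ} (hab : a ≤ b)
    (hg : IntervalIntegrable g volume a b) (hnn : ∀ x ∈ Icc a b, 0 ≤ g x)
    (hsupp : 0 < volume (Function.support g ∩ Icc a b)) : 0 < ∫ x in a..b, g x := by
  rw [integral_of_le hab, ← integral_Icc_eq_integral_Ioc,
    setIntegral_pos_iff_support_of_nonneg_ae ?_
      ((intervalIntegrable_iff_integrableOn_Icc_of_le hab).1 hg)]
  · exact hsupp
  · filter_upwards [ae_restrict_mem measurableSet_Icc] with x hx using hnn x hx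

section Continuous

variable {f : ℝ × ℝ → ℝ}

theorem continuous_intervalIntegral_snd (hf : Continuous f) (b₀ : ℝ) :
    Continuous fun p : ℝ × ℝ => ∫ w in b₀..p.2, f (p.1, w) :=
  continuous_parametric_primitive_of_continuous (f := fun a w => f (a, w)) hf

theorem continuous_intervalIntegral_fst (hf : Continuous f) (a₀ : ℝ) :
    Continuous fun p : ℝ × ℝ => ∫ v in a₀..p.1, f (v, p.2) :=
  (continuous_parametric_primitive_of_continuous (f := fun w v => f (v, w))
    (hf.comp continuous_swap)).comp continuous_swap

theorem continuous_Fcdf (hf : Continuous f) : Continuous fun p : ℝ × ℝ => Fcdf f p.1 p.2 :=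
  continuous_intervalIntegral_fst (continuous_intervalIntegral_snd hf 0) 0

end Continuous

def antihazGap (f : ℝ × ℝ → ℝ) (c a w : ℝ) : ℝ :=
  (∫ v in (0:ℝ)..a, f (v, w)) - c * f (a, w)

section antihazGap

variable {f : ℝ × ℝ → ℝ} {a₀ b₀ a w : ℝ}

theorem continuous_antihazGap (hf : Continuous f) (c : ℝ) :
    Continuous fun p : ℝ × ℝ => antihazGap f c p.1 p.2 :=
  (continuous_intervalIntegral_fst hf 0).sub (continuous_const.mul hf)

theorem integral_antihazGap (hf : Continuous f) (c a b : ℝ) :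
    ∫ w in (0:ℝ)..b, antihazGap f c a w = Fcdf f a b - c * ∫ w in (0:ℝ)..b, f (a, w) := by
  simp only [antihazGap]
  rw [intervalIntegral.integral_sub, intervalIntegral.integral_const_mul, Fcdf,
    intervalIntegral_integral_swap hf]
  · exact ((continuous_intervalIntegral_fst hf 0).comp (Continuous.prodMk_right a))
      |>.intervalIntegrable _ _
  · exact (continuous_const.mul (hf.comp (Continuous.prodMk_right a))).intervalIntegrable _ _

theorem antihazGap_eq_sub_mul {c : ℝ} (h : f (a, w) ≠ 0) :
    antihazGap f c a w = (antihazA f a w - c) * f (a, w) := by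
  rw [antihazGap, antihazA, sub_mul, div_mul_cancel₀ _ h]

theorem antihazGap_neg (hfw : 0 < f (a, w))
    (hA : StrictMonoOn (fun a => antihazA f a w) (Icc 0 1))
    (hB : MonotoneOn (fun b => antihazA f a₀ b) (Icc 0 1)) (ha : a ∈ Icc (0:ℝ) 1)
    (ha₀ : a₀ ∈ Icc (0:ℝ) 1) (hw : w ∈ Icc (0:ℝ) 1) (hb₀ : b₀ ∈ Icc (0:ℝ) 1)
    (haa₀ : a < a₀) (hwb₀ : w ≤ b₀) : antihazGap f (antihazA f a₀ b₀) a w < 0 := by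
  rw [antihazGap_eq_sub_mul hfw.ne']
  exact mul_neg_of_neg_of_pos (sub_neg.2 ((hA ha ha₀ haa₀).trans_le (hB hw hb₀ hwb₀))) hfw

theorem antihazGap_pos (hfw : 0 < f (a, w))
    (hA : StrictMonoOn (fun a => antihazA f a w) (Icc 0 1))
    (hB : MonotoneOn (fun b => antihazA f a₀ b) (Icc 0 1)) (ha : a ∈ Icc (0:ℝ) 1)
    (ha₀ : a₀ ∈ Icc (0:ℝ) 1) (hw : w ∈ Icc (0:ℝ) 1) (hb₀ : b₀ ∈ Icc (0:ℝ) 1)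
    (ha₀a : a₀ < a) (hb₀w : b₀ ≤ w) : 0 < antihazGap f (antihazA f a₀ b₀) a w := by
  rw [antihazGap_eq_sub_mul hfw.ne']
  exact mul_pos (sub_pos.2 ((hB hb₀ hw hb₀w).trans_lt (hA ha₀ ha ha₀a))) hfw

theorem integral_antihazGap_neg (hf : Continuous f) (hpos : ∀ p ∈ square, 0 < f p)
    (hA : ∀ b ∈ Icc (0:ℝ) 1, StrictMonoOn (fun a => antihazA f a b) (Icc 0 1))
    (hB : MonotoneOn (fun b => antihazA f a₀ b) (Icc 0 1)) (ha : a ∈ Icc (0:ℝ) 1)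
    (ha₀ : a₀ ∈ Icc (0:ℝ) 1) (hb₀ : b₀ ∈ Icc (0:ℝ) 1) (haa₀ : a < a₀) {lo hi : ℝ}
    (hlo : 0 ≤ lo) (hlohi : lo < hi) (hhi : hi ≤ b₀) :
    ∫ w in lo..hi, antihazGap f (antihazA f a₀ b₀) a w < 0 := by
  have hcont : Continuous fun w => antihazGap f (antihazA f a₀ b₀) a w :=
    (continuous_antihazGap hf _).comp (Continuous.prodMk_right a)
  have h : 0 < ∫ w in lo..hi, -antihazGap f (antihazA f a₀ b₀) a w := by
    refine intervalIntegral_pos_of_pos_on (hcont.neg.intervalIntegrable _ _) (fun w hw => ?_)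
      hlohi
    have hwI : w ∈ Icc (0:ℝ) 1 := ⟨hlo.trans hw.1.le, hw.2.le.trans (hhi.trans hb₀.2)⟩
    exact neg_pos.2 (antihazGap_neg (hpos _ ⟨ha, hwI⟩) (hA w hwI) hB ha ha₀ hwI hb₀ haa₀
      (hw.2.le.trans hhi))
  rwa [intervalIntegral.integral_neg, neg_pos] at h

theorem integral_antihazGap_pos (hf : Continuous f) (hpos : ∀ p ∈ square, 0 < f p)
    (hA : ∀ b ∈ Icc (0:ℝ) 1, StrictMonoOn (fun a => antihazA f a b) (Icc 0 1))
    (hB : MonotoneOn (fun b => antihazA f a₀ b) (Icc 0 1)) (ha : a ∈ Icc (0:ℝ) 1)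
    (ha₀ : a₀ ∈ Icc (0:ℝ) 1) (hb₀ : b₀ ∈ Icc (0:ℝ) 1) (ha₀a : a₀ < a) {lo hi : ℝ}
    (hlo : b₀ ≤ lo) (hlohi : lo < hi) (hhi : hi ≤ 1) :
    0 < ∫ w in lo..hi, antihazGap f (antihazA f a₀ b₀) a w := by
  have hcont : Continuous fun w => antihazGap f (antihazA f a₀ b₀) a w :=
    (continuous_antihazGap hf _).comp (Continuous.prodMk_right a)
  refine intervalIntegral_pos_of_pos_on (hcont.intervalIntegrable _ _) (fun w hw => ?_) hlohi
  have hwI : w ∈ Icc (0:ℝ) 1 := ⟨hb₀.1.trans (hlo.trans hw.1.le), hw.2.le.trans hhi⟩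
  exact antihazGap_pos (hpos _ ⟨ha, hwI⟩) (hA w hwI) hB ha ha₀ hwI hb₀ ha₀a (hlo.trans hw.1.le)

theorem integral_antihazGap_crossing_pos (hf : Continuous f) (hpos : ∀ p ∈ square, 0 < f p)
    (hA : ∀ b ∈ Icc (0:ℝ) 1, StrictMonoOn (fun a => antihazA f a b) (Icc 0 1))
    (hB : MonotoneOn (fun b => antihazA f a₀ b) (Icc 0 1)) {z₁ z₂ : ℝ → ℝ}
    (hm₂ : MonotoneOn z₂ (Icc 0 1)) (hr₁ : MapsTo z₁ (Icc 0 1) (Icc 0 1))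
    (ha₀ : a₀ ∈ Icc (0:ℝ) 1) (hbefore : ∀ a ∈ Icc (0:ℝ) 1, a ≤ a₀ → z₁ a ≤ z₂ a)
    (hafter : ∀ a ∈ Icc (0:ℝ) 1, a₀ ≤ a → z₂ a ≤ z₁ a) (ha : a ∈ Icc (0:ℝ) 1)
    (hne : z₁ a ≠ z₂ a) : 0 < ∫ w in z₂ a..z₁ a, antihazGap f (antihazA f a₀ (z₁ a₀)) a w := by
  have hz₀ : z₂ a₀ = z₁ a₀ := le_antisymm (hafter a₀ ha₀ le_rfl) (hbefore a₀ ha₀ le_rfl)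
  rcases lt_trichotomy a a₀ with hlt | rfl | hgt
  · rw [integral_symm, neg_pos]
    exact integral_antihazGap_neg hf hpos hA hB ha ha₀ (hr₁ ha₀) hlt (hr₁ ha).1
      ((hbefore a ha hlt.le).lt_of_ne hne) (hz₀ ▸ hm₂ ha ha₀ hlt.le)
  · exact absurd hz₀.symm hne
  · exact integral_antihazGap_pos hf hpos hA hB ha ha₀ (hr₁ ha₀) hgt (hz₀ ▸ hm₂ ha₀ ha hgt.le)
      ((hafter a ha hgt.le).lt_of_ne hne.symm) (hr₁ ha).2

end antihazGap

section Comparison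

variable {f : ℝ × ℝ → ℝ} {z₁ z₂ : ℝ → ℝ}

theorem intervalIntegrable_integral_antihazGap (hf : Continuous f)
    (hm₁ : MonotoneOn z₁ (Icc 0 1)) (hm₂ : MonotoneOn z₂ (Icc 0 1)) (c : ℝ) :
    IntervalIntegrable (fun a => ∫ w in z₂ a..z₁ a, antihazGap f c a w) volume 0 1 := by
  have hQ : ∀ a, Continuous fun w => antihazGap f c a w := fun a =>
    (continuous_antihazGap hf c).comp (Continuous.prodMk_right a)
  have hΦ := continuous_intervalIntegral_snd (continuous_antihazGap hf c) 0
  convert (intervalIntegrable_comp_monotoneOn hΦ zero_le_one hm₁).sub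
    (intervalIntegrable_comp_monotoneOn hΦ zero_le_one hm₂) using 1
  funext a
  exact (integral_interval_sub_left ((hQ a).intervalIntegrable _ _)
    ((hQ a).intervalIntegrable _ _)).symm

theorem integral_Fcdf_sub_integral_Fcdf (hf : Continuous f)
    (hm₁ : MonotoneOn z₁ (Icc 0 1)) (hm₂ : MonotoneOn z₂ (Icc 0 1))
    (hmass : (∫ a in (0:ℝ)..1, ∫ b in (0:ℝ)..(z₁ a), f (a, b))
      = ∫ a in (0:ℝ)..1, ∫ b in (0:ℝ)..(z₂ a), f (a, b)) (c : ℝ) :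
    (∫ a in (0:ℝ)..1, Fcdf f a (z₁ a)) - (∫ a in (0:ℝ)..1, Fcdf f a (z₂ a))
      = ∫ a in (0:ℝ)..1, ∫ w in z₂ a..z₁ a, antihazGap f c a w := by
  have hQ : ∀ a, Continuous fun w => antihazGap f c a w := fun a =>
    (continuous_antihazGap hf c).comp (Continuous.prodMk_right a)
  have hF {z : ℝ → ℝ} (hz : MonotoneOn z (Icc 0 1)) :=
    intervalIntegrable_comp_monotoneOn (continuous_Fcdf hf) zero_le_one hz
  have hM {z : ℝ → ℝ} (hz : MonotoneOn z (Icc 0 1)) :=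
    (intervalIntegrable_comp_monotoneOn (continuous_intervalIntegral_snd hf 0) zero_le_one hz)
      |>.const_mul c
  have hS : ∀ a, ∫ w in z₂ a..z₁ a, antihazGap f c a w
      = (Fcdf f a (z₁ a) - c * ∫ w in (0:ℝ)..z₁ a, f (a, w))
        - (Fcdf f a (z₂ a) - c * ∫ w in (0:ℝ)..z₂ a, f (a, w)) := fun a => by
    rw [← integral_antihazGap hf, ← integral_antihazGap hf,
      integral_interval_sub_left ((hQ a).intervalIntegrable _ _) ((hQ a).intervalIntegrable _ _)]
  simp only [hS]
  rw [intervalIntegral.integral_sub ((hF hm₁).sub (hM hm₁)) ((hF hm₂).sub (hM hm₂)),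
    intervalIntegral.integral_sub (hF hm₁) (hM hm₁),
    intervalIntegral.integral_sub (hF hm₂) (hM hm₂),
    intervalIntegral.integral_const_mul, intervalIntegral.integral_const_mul, hmass]
  ring

theorem single_crossing_comparison_of_continuous (hf : Continuous f)
    (hpos : ∀ p ∈ square, 0 < f p)
    (hA : ∀ b ∈ Icc (0:ℝ) 1, StrictMonoOn (fun a => antihazA f a b) (Icc (0:ℝ) 1))
    (hB : ∀ a ∈ Icc (0:ℝ) 1, MonotoneOn (fun b => antihazA f a b) (Icc (0:ℝ) 1))
    (hm₁ : MonotoneOn z₁ (Icc 0 1)) (hm₂ : MonotoneOn z₂ (Icc 0 1))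
    (hr₁ : MapsTo z₁ (Icc 0 1) (Icc 0 1)) {a₀ : ℝ} (ha₀ : a₀ ∈ Icc (0:ℝ) 1)
    (hbefore : ∀ a ∈ Icc (0:ℝ) 1, a ≤ a₀ → z₁ a ≤ z₂ a)
    (hafter : ∀ a ∈ Icc (0:ℝ) 1, a₀ ≤ a → z₂ a ≤ z₁ a)
    (hdiff : 0 < volume {a ∈ Icc (0:ℝ) 1 | z₁ a ≠ z₂ a})
    (hmass : (∫ a in (0:ℝ)..1, ∫ b in (0:ℝ)..(z₁ a), f (a, b))
      = ∫ a in (0:ℝ)..1, ∫ b in (0:ℝ)..(z₂ a), f (a, b)) :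
    (∫ a in (0:ℝ)..1, Fcdf f a (z₂ a)) < ∫ a in (0:ℝ)..1, Fcdf f a (z₁ a) := by
  have hS {a : ℝ} := integral_antihazGap_crossing_pos hf hpos hA (hB a₀ ha₀) hm₂ hr₁ ha₀
    hbefore hafter (a := a)
  rw [← sub_pos, integral_Fcdf_sub_integral_Fcdf hf hm₁ hm₂ hmass (antihazA f a₀ (z₁ a₀))]
  refine intervalIntegral_pos_of_nonneg_of_support zero_le_one
    (intervalIntegrable_integral_antihazGap hf hm₁ hm₂ _) (fun a ha => ?_)
    (hdiff.trans_le (measure_mono fun a ha => ⟨(hS ha.1 ha.2).ne', ha.1⟩))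
  rcases eq_or_ne (z₁ a) (z₂ a) with h | h
  · rw [h, integral_same]
  · exact (hS ha h).le

end Comparison

section EqOnSquare

variable {f g : ℝ × ℝ → ℝ} {a b : ℝ}

theorem uIcc_zero_subset_unitInterval (ha : a ∈ Icc (0:ℝ) 1) : uIcc 0 a ⊆ Icc (0:ℝ) 1 :=
  uIcc_subset_Icc (left_mem_Icc.2 zero_le_one) ha

theorem antihazA_eq_of_eqOn (h : EqOn g f square) (ha : a ∈ Icc (0:ℝ) 1)
    (hb : b ∈ Icc (0:ℝ) 1) : antihazA g a b = antihazA f a b := by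
  rw [antihazA, antihazA, h ⟨ha, hb⟩, intervalIntegral.integral_congr fun _ hv =>
    h ⟨uIcc_zero_subset_unitInterval ha hv, hb⟩]

theorem integral_slice_eq_of_eqOn (h : EqOn g f square) (ha : a ∈ Icc (0:ℝ) 1)
    (hb : b ∈ Icc (0:ℝ) 1) : ∫ w in (0:ℝ)..b, g (a, w) = ∫ w in (0:ℝ)..b, f (a, w) :=
  intervalIntegral.integral_congr fun _ hw => h ⟨ha, uIcc_zero_subset_unitInterval hb hw⟩

theorem Fcdf_eq_of_eqOn (h : EqOn g f square) (ha : a ∈ Icc (0:ℝ) 1) (hb : b ∈ Icc (0:ℝ) 1) :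
    Fcdf g a b = Fcdf f a b :=
  intervalIntegral.integral_congr fun _ hv =>
    integral_slice_eq_of_eqOn h (uIcc_zero_subset_unitInterval ha hv) hb

theorem integral_unitInterval_congr {u v : ℝ → ℝ} (h : EqOn u v (Icc 0 1)) :
    ∫ a in (0:ℝ)..1, u a = ∫ a in (0:ℝ)..1, v a :=
  intervalIntegral.integral_congr (by rwa [uIcc_of_le zero_le_one])

end EqOnSquare

theorem single_crossing_equal_mass_comparison
    (f : ℝ × ℝ → ℝ)
    (hfc : ContinuousOn f square) (hfpos : ∀ p ∈ square, 0 < f p)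
    (hhazA : ∀ b ∈ Icc (0:ℝ) 1,
      StrictMonoOn (fun a => antihazA f a b) (Icc (0:ℝ) 1))
    (hhazB : ∀ a ∈ Icc (0:ℝ) 1,
      MonotoneOn (fun b => antihazA f a b) (Icc (0:ℝ) 1))
    (z1 z2 : ℝ → ℝ)
    (hm1 : MonotoneOn z1 (Icc (0:ℝ) 1)) (hm2 : MonotoneOn z2 (Icc (0:ℝ) 1))
    (hr1 : MapsTo z1 (Icc (0:ℝ) 1) (Icc (0:ℝ) 1))
    (hr2 : MapsTo z2 (Icc (0:ℝ) 1) (Icc (0:ℝ) 1))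
    (astar : ℝ) (hstar : astar ∈ Ioo (0:ℝ) 1)
    (hbefore : ∀ a ∈ Icc (0:ℝ) 1, a ≤ astar → z1 a ≤ z2 a)
    (hafter : ∀ a ∈ Icc (0:ℝ) 1, astar ≤ a → z2 a ≤ z1 a)
    (hdiff : 0 < volume {a ∈ Icc (0:ℝ) 1 | z1 a ≠ z2 a})
    (hmassEq : (∫ a in (0:ℝ)..1, ∫ b in (0:ℝ)..(z1 a), f (a, b))
      = ∫ a in (0:ℝ)..1, ∫ b in (0:ℝ)..(z2 a), f (a, b)) :
    (∫ a in (0:ℝ)..1, Fcdf f a (z2 a)) < ∫ a in (0:ℝ)..1, Fcdf f a (z1 a) := by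
  obtain ⟨g, hg, hgf⟩ := exists_continuous_eqOn_square hfc
  have hFcdf {z : ℝ → ℝ} (hz : MapsTo z (Icc 0 1) (Icc 0 1)) :
      ∫ a in (0:ℝ)..1, Fcdf g a (z a) = ∫ a in (0:ℝ)..1, Fcdf f a (z a) :=
    integral_unitInterval_congr fun a ha => Fcdf_eq_of_eqOn hgf ha (hz ha)
  have hmass {z : ℝ → ℝ} (hz : MapsTo z (Icc 0 1) (Icc 0 1)) :
      ∫ a in (0:ℝ)..1, ∫ b in (0:ℝ)..(z a), g (a, b)
        = ∫ a in (0:ℝ)..1, ∫ b in (0:ℝ)..(z a), f (a, b) :=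
    integral_unitInterval_congr fun a ha => integral_slice_eq_of_eqOn hgf ha (hz ha)
  rw [← hFcdf hr1, ← hFcdf hr2]
  refine single_crossing_comparison_of_continuous hg (fun p hp => hgf hp ▸ hfpos p hp)
    (fun b hb => (hhazA b hb).congr fun a ha => (antihazA_eq_of_eqOn hgf ha hb).symm)
    (fun a ha => (hhazB a ha).congr fun b hb => (antihazA_eq_of_eqOn hgf ha hb).symm)
    hm1 hm2 hr1 (Ioo_subset_Icc_self hstar) hbefore hafter hdiff ?_
  rw [hmass hr1, hmass hr2, hmassEq]
end
end

section
/- Allocative efficiency of market-clearing prices: Let F be a probability distribution on [0,1]² with continuous strictly positive density f, and let μ_A, μ_B > 0 with μ_A + μ_B ≤ 1. Let η_A, η_B ≥ 0 be market-clearing prices: F({(a,b) : a − η_A > max(0, b − η_B)}) = μ_A and F({(a,b) : b − η_B > max(0, a − η_A)}) = μ_B. Then for all measurable q_A, q_B : [0,1]² → [0,1] with q_A(a,b) + q_B(a,b) ≤ 1 for every (a,b), ∫ q_A dF ≤ μ_A and ∫ q_B dF ≤ μ_B, one has ∫ (q_A(a,b)·a + q_B(a,b)·b) dF(a,b) ≤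 ∫ (1[a − η_A > max(0, b − η_B)]·a + 1[b − η_B > max(0, a − η_A)]·b) dF(a,b). That is, the posted-price allocation maximizes allocative efficiency subject to the supply constraints. -/
/- Allocative efficiency of market-clearing prices (Proposition 4). -/

open Set MeasureTheory

noncomputable section
open scoped Classical

/-- The `F`-measure of a set of types. -/
def Fmeas (f : ℝ × ℝ → ℝ) (S : Set (ℝ × ℝ)) : ℝ := ∫ p in S ∩ square, f p

theorem market_clearing_prices_allocatively_efficient
    (f : ℝ × ℝ → ℝ)
    (hfc : ContinuousOn f square) (hfpos : ∀ p ∈ square, 0 < f p)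
    (hprob : Fmeas f square = 1)
    (muA muB : ℝ) (hmuA : 0 < muA) (hmuB : 0 < muB) (hmu : muA + muB ≤ 1)
    (etaA etaB : ℝ) (hetaA : 0 ≤ etaA) (hetaB : 0 ≤ etaB)
    -- market clearing:
    (hclearA : Fmeas f {p | max 0 (p.2 - etaB) < p.1 - etaA} = muA)
    (hclearB : Fmeas f {p | max 0 (p.1 - etaA) < p.2 - etaB} = muB)
    -- an arbitrary supply-feasible allocation (q_A, q_B):
    (qA qB : ℝ × ℝ → ℝ)
    (hqAm : Measurable qA) (hqBm : Measurable qB)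
    (hqA01 : ∀ p ∈ square, qA p ∈ Icc (0:ℝ) 1)
    (hqB01 : ∀ p ∈ square, qB p ∈ Icc (0:ℝ) 1)
    (hsum : ∀ p ∈ square, qA p + qB p ≤ 1)
    (hsupA : (∫ p in square, qA p * f p) ≤ muA)
    (hsupB : (∫ p in square, qB p * f p) ≤ muB) :
    (∫ p in square, (qA p * p.1 + qB p * p.2) * f p)
      ≤ ∫ p in square,
          ((if max 0 (p.2 - etaB) < p.1 - etaA then p.1 else 0)
            + (if max 0 (p.1 - etaA) < p.2 - etaB then p.2 else 0)) * f p := by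
  
  have hsq : MeasurableSet square := measurableSet_Icc.prod measurableSet_Icc
  have hsqc : IsCompact square := isCompact_Icc.prod isCompact_Icc
  -- bound on f
  obtain ⟨M, hM⟩ : ∃ M, ∀ p ∈ square, ‖f p‖ ≤ M := hsqc.exists_bound_of_continuousOn hfc
  have hfm : AEStronglyMeasurable f (volume.restrict square) :=
    hfc.aestronglyMeasurable hsq
  -- the sets A, B and their indicator functions
  set A : Set (ℝ × ℝ) := {p | max 0 (p.2 - etaB) < p.1 - etaA} with hAdef
  set B : Set (ℝ × ℝ) := {p | max 0 (p.1 - etaA) < p.2 - etaB} with hBdef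
  have hAm : MeasurableSet A :=
    measurableSet_lt (measurable_const.max (measurable_snd.sub measurable_const))
      (measurable_fst.sub measurable_const)
  have hBm : MeasurableSet B :=
    measurableSet_lt (measurable_const.max (measurable_fst.sub measurable_const))
      (measurable_snd.sub measurable_const)
  set chiA : ℝ × ℝ → ℝ := fun p => if max 0 (p.2 - etaB) < p.1 - etaA then 1 else 0 with hchiA
  set chiB : ℝ × ℝ → ℝ := fun p => if max 0 (p.1 - etaA) < p.2 - etaB then 1 else 0 with hchiB
  have hchiAm : Measurable chiA := Measurable.ite hAm measurable_const measurable_const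
  have hchiBm : Measurable chiB := Measurable.ite hBm measurable_const measurable_const
  have hchiA01 : ∀ p, chiA p ∈ Icc (0:ℝ) 1 := fun p => by
    simp only [hchiA]; split <;> norm_num
  have hchiB01 : ∀ p, chiB p ∈ Icc (0:ℝ) 1 := fun p => by
    simp only [hchiB]; split <;> norm_num
  -- integrability helper
  have hint : ∀ (g : ℝ × ℝ → ℝ) (C : ℝ), AEStronglyMeasurable g (volume.restrict square) →
      (∀ p ∈ square, |g p| ≤ C) → IntegrableOn (fun p => g p * f p) square := by
    intro g C hgm hgb
    have h0 : (0:ℝ×ℝ) ∈ square := by constructor <;> exact ⟨le_refl 0, zero_le_one⟩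
    have hC0 : 0 ≤ C := le_trans (abs_nonneg _) (hgb 0 h0)
    refine Integrable.mono' (g := fun _ => C * M)
      (integrableOn_const hsqc.measure_lt_top.ne) (hgm.mul hfm) ?_
    rw [ae_restrict_iff' hsq]
    refine Filter.Eventually.of_forall fun p hp => ?_
    have h1 := hgb p hp
    have h2 := hM p hp
    rw [Real.norm_eq_abs, abs_mul]
    rw [Real.norm_eq_abs] at h2
    exact mul_le_mul h1 h2 (abs_nonneg _) hC0
  -- bounds on the relevant functions on the square
  have hxb : ∀ p : ℝ × ℝ, p ∈ square → |p.1 - etaA| ≤ 1 + etaA := by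
    intro p hp
    have := hp.1.1; have := hp.1.2
    rw [abs_le]; constructor <;> linarith
  have hyb : ∀ p : ℝ × ℝ, p ∈ square → |p.2 - etaB| ≤ 1 + etaB := by
    intro p hp
    have := hp.2.1; have := hp.2.2
    rw [abs_le]; constructor <;> linarith
  have habs01 : ∀ (u : ℝ), u ∈ Icc (0:ℝ) 1 → |u| ≤ 1 := fun u hu => by
    rw [abs_le]; constructor <;> [linarith [hu.1]; exact hu.2]
  have hcomb : ∀ (u v : ℝ) (p : ℝ × ℝ), u ∈ Icc (0:ℝ) 1 → v ∈ Icc (0:ℝ) 1 → p ∈ square →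
      |u * (p.1 - etaA) + v * (p.2 - etaB)| ≤ (1 + etaA) + (1 + etaB) := by
    intro u v p hu hv hp
    calc |u * (p.1 - etaA) + v * (p.2 - etaB)|
        ≤ |u * (p.1 - etaA)| + |v * (p.2 - etaB)| := abs_add_le _ _
      _ ≤ (1 + etaA) + (1 + etaB) := by
          rw [abs_mul, abs_mul]
          refine add_le_add ?_ ?_
          · calc |u| * |p.1 - etaA| ≤ 1 * (1 + etaA) :=
                mul_le_mul (habs01 u hu) (hxb p hp) (abs_nonneg _) zero_le_one
            _ = 1 + etaA := one_mul _
          · calc |v| * |p.2 - etaB| ≤ 1 * (1 + etaB) :=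
                mul_le_mul (habs01 v hv) (hyb p hp) (abs_nonneg _) zero_le_one
            _ = 1 + etaB := one_mul _
  -- the integrable functions we need
  have i_qA : IntegrableOn (fun p => qA p * f p) square :=
    hint qA 1 hqAm.aestronglyMeasurable (fun p hp => habs01 _ (hqA01 p hp))
  have i_qB : IntegrableOn (fun p => qB p * f p) square :=
    hint qB 1 hqBm.aestronglyMeasurable (fun p hp => habs01 _ (hqB01 p hp))
  have i_chiA : IntegrableOn (fun p => chiA p * f p) square :=
    hint chiA 1 hchiAm.aestronglyMeasurable (fun p _ => habs01 _ (hchiA01 p))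
  have i_chiB : IntegrableOn (fun p => chiB p * f p) square :=
    hint chiB 1 hchiBm.aestronglyMeasurable (fun p _ => habs01 _ (hchiB01 p))
  have i_g1 : IntegrableOn (fun p => (qA p * (p.1 - etaA) + qB p * (p.2 - etaB)) * f p) square :=
    hint _ ((1 + etaA) + (1 + etaB))
      (((hqAm.mul (measurable_fst.sub measurable_const)).add
        (hqBm.mul (measurable_snd.sub measurable_const))).aestronglyMeasurable)
      (fun p hp => hcomb _ _ p (hqA01 p hp) (hqB01 p hp) hp)
  have i_g2 : IntegrableOn (fun p => (chiA p * (p.1 - etaA) + chiB p * (p.2 - etaB)) * f p) square :=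
    hint _ ((1 + etaA) + (1 + etaB))
      (((hchiAm.mul (measurable_fst.sub measurable_const)).add
        (hchiBm.mul (measurable_snd.sub measurable_const))).aestronglyMeasurable)
      (fun p hp => hcomb _ _ p (hchiA01 p) (hchiB01 p) hp)
  -- decomposition of the LHS
  have eq1 : (∫ p in square, (qA p * p.1 + qB p * p.2) * f p)
      = (∫ p in square, (qA p * (p.1 - etaA) + qB p * (p.2 - etaB)) * f p)
        + etaA * (∫ p in square, qA p * f p) + etaB * (∫ p in square, qB p * f p) := by
    have j1 : IntegrableOn (fun p => etaA * (qA p * f p)) square :=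
      Integrable.const_mul i_qA etaA
    have j2 : IntegrableOn (fun p => etaB * (qB p * f p)) square :=
      Integrable.const_mul i_qB etaB
    have j3 : IntegrableOn (fun p => (qA p * (p.1 - etaA) + qB p * (p.2 - etaB)) * f p
        + etaA * (qA p * f p)) square := i_g1.add j1
    rw [integral_congr_ae (Filter.Eventually.of_forall (fun p =>
        (by ring : (qA p * p.1 + qB p * p.2) * f p
          = ((qA p * (p.1 - etaA) + qB p * (p.2 - etaB)) * f p + etaA * (qA p * f p))
            + etaB * (qB p * f p)))),
      integral_add j3 j2, integral_add i_g1 j1, integral_const_mul, integral_const_mul]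
  -- decomposition of the RHS
  have hptR : ∀ p : ℝ × ℝ,
      ((if max 0 (p.2 - etaB) < p.1 - etaA then p.1 else 0)
        + (if max 0 (p.1 - etaA) < p.2 - etaB then p.2 else 0)) * f p
      = ((chiA p * (p.1 - etaA) + chiB p * (p.2 - etaB)) * f p
          + etaA * (chiA p * f p)) + etaB * (chiB p * f p) := by
    intro p
    simp only [hchiA, hchiB]
    by_cases h1 : max 0 (p.2 - etaB) < p.1 - etaA <;>
      by_cases h2 : max 0 (p.1 - etaA) < p.2 - etaB <;>
      simp only [h1, h2, if_true, if_false] <;> ring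
  have eq2 : (∫ p in square,
        ((if max 0 (p.2 - etaB) < p.1 - etaA then p.1 else 0)
          + (if max 0 (p.1 - etaA) < p.2 - etaB then p.2 else 0)) * f p)
      = (∫ p in square, (chiA p * (p.1 - etaA) + chiB p * (p.2 - etaB)) * f p)
        + etaA * (∫ p in square, chiA p * f p) + etaB * (∫ p in square, chiB p * f p) := by
    have j1 : IntegrableOn (fun p => etaA * (chiA p * f p)) square :=
      Integrable.const_mul i_chiA etaA
    have j2 : IntegrableOn (fun p => etaB * (chiB p * f p)) square :=
      Integrable.const_mul i_chiB etaB
    have j3 : IntegrableOn (fun p => (chiA p * (p.1 - etaA) + chiB p * (p.2 - etaB)) * f p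
        + etaA * (chiA p * f p)) square := i_g2.add j1
    rw [integral_congr_ae (Filter.Eventually.of_forall (fun p =>
        ((hptR p).trans (by ring) :
          ((if max 0 (p.2 - etaB) < p.1 - etaA then p.1 else 0)
            + (if max 0 (p.1 - etaA) < p.2 - etaB then p.2 else 0)) * f p
          = ((chiA p * (p.1 - etaA) + chiB p * (p.2 - etaB)) * f p + etaA * (chiA p * f p))
            + etaB * (chiB p * f p)))),
      integral_add j3 j2, integral_add i_g2 j1, integral_const_mul, integral_const_mul]
  -- indicator integrals equal the market-clearing quantities
  have hchiA_eq : (∫ p in square, chiA p * f p) = muA := by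
    have h : ∀ p, chiA p * f p = A.indicator f p := by
      intro p
      simp only [hchiA, Set.indicator_apply, hAdef, Set.mem_setOf_eq]
      split <;> simp
    rw [integral_congr_ae (Filter.Eventually.of_forall h), setIntegral_indicator hAm,
      Set.inter_comm]
    exact hclearA
  have hchiB_eq : (∫ p in square, chiB p * f p) = muB := by
    have h : ∀ p, chiB p * f p = B.indicator f p := by
      intro p
      simp only [hchiB, Set.indicator_apply, hBdef, Set.mem_setOf_eq]
      split <;> simp
    rw [integral_congr_ae (Filter.Eventually.of_forall h), setIntegral_indicator hBm,
      Set.inter_comm]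
    exact hclearB
  -- pointwise key inequality off the tie line
  have key : ∀ p : ℝ × ℝ, p ∈ square → p.1 - etaA ≠ p.2 - etaB →
      qA p * (p.1 - etaA) + qB p * (p.2 - etaB)
        ≤ chiA p * (p.1 - etaA) + chiB p * (p.2 - etaB) := by
    intro p hp hne
    set x := p.1 - etaA
    set y := p.2 - etaB
    obtain ⟨hu0, hu1⟩ := hqA01 p hp
    obtain ⟨hv0, hv1⟩ := hqB01 p hp
    have hs := hsum p hp
    have m1 : y ≤ max 0 y := le_max_right 0 y
    have m2 : (0:ℝ) ≤ max 0 y := le_max_left 0 y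
    have m3 : x ≤ max 0 x := le_max_right 0 x
    have m4 : (0:ℝ) ≤ max 0 x := le_max_left 0 x
    by_cases h1 : max 0 y < x
    · have h2 : ¬ max 0 x < y := by intro h2; linarith
      simp only [hchiA, hchiB, show max 0 (p.2 - etaB) < p.1 - etaA from h1, show ¬ (max 0 (p.1 - etaA) < p.2 - etaB) from h2, if_true, if_false]
      have hx0 : 0 < x := lt_of_le_of_lt m2 h1
      have hyx : y < x := lt_of_le_of_lt m1 h1
      nlinarith [mul_le_mul_of_nonneg_left hyx.le hv0,
        mul_le_mul_of_nonneg_right hs hx0.le]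
    · by_cases h2 : max 0 x < y
      · simp only [hchiA, hchiB, show ¬ (max 0 (p.2 - etaB) < p.1 - etaA) from h1, show max 0 (p.1 - etaA) < p.2 - etaB from h2, if_true, if_false]
        have hy0 : 0 < y := lt_of_le_of_lt m4 h2
        have hxy : x < y := lt_of_le_of_lt m3 h2
        nlinarith [mul_le_mul_of_nonneg_left hxy.le hu0,
          mul_le_mul_of_nonneg_right hs hy0.le]
      · simp only [hchiA, hchiB, show ¬ (max 0 (p.2 - etaB) < p.1 - etaA) from h1, show ¬ (max 0 (p.1 - etaA) < p.2 - etaB) from h2, if_false]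
        push_neg at h1 h2
        have hx0 : x ≤ 0 := by
          by_contra hx
          push_neg at hx
          rw [max_eq_right hx.le] at h2
          rcases le_or_gt y 0 with hy | hy
          · rw [max_eq_left hy] at h1; linarith
          · rw [max_eq_right hy.le] at h1
            exact hne (le_antisymm h1 h2)
        have hy0 : y ≤ 0 := by
          by_contra hy
          push_neg at hy
          rw [max_eq_left hx0] at h2
          linarith
        nlinarith [mul_nonneg hu0 (neg_nonneg.mpr hx0), mul_nonneg hv0 (neg_nonneg.mpr hy0)]
  -- the null tie line
  have hNzero : (volume : Measure (ℝ × ℝ)) {p : ℝ × ℝ | p.1 - etaA = p.2 - etaB} = 0 := by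
    have hNm : MeasurableSet {p : ℝ × ℝ | p.1 - etaA = p.2 - etaB} :=
      measurableSet_eq_fun (measurable_fst.sub measurable_const)
        (measurable_snd.sub measurable_const)
    rw [Measure.volume_eq_prod, Measure.prod_apply hNm]
    have h : ∀ x : ℝ, volume (Prod.mk x ⁻¹' {p : ℝ × ℝ | p.1 - etaA = p.2 - etaB}) = 0 := by
      intro x
      have he : Prod.mk x ⁻¹' {p : ℝ × ℝ | p.1 - etaA = p.2 - etaB} = {x - etaA + etaB} := by
        ext y; simp only [Set.mem_preimage, Set.mem_setOf_eq, Set.mem_singleton_iff]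
        constructor <;> intro h <;> linarith
      rw [he]; exact measure_singleton _
    rw [lintegral_congr h, lintegral_zero]
  -- a.e. inequality between the surplus integrands
  have hE : (∫ p in square, (qA p * (p.1 - etaA) + qB p * (p.2 - etaB)) * f p)
      ≤ ∫ p in square, (chiA p * (p.1 - etaA) + chiB p * (p.2 - etaB)) * f p := by
    refine integral_mono_ae i_g1 i_g2 ?_
    have hae1 : ∀ᵐ p ∂(volume.restrict square), p.1 - etaA ≠ p.2 - etaB :=
      ae_restrict_of_ae (measure_eq_zero_iff_ae_notMem.mp hNzero)
    filter_upwards [hae1, ae_restrict_mem hsq] with p hne hp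
    exact mul_le_mul_of_nonneg_right (key p hp hne) (hfpos p hp).le
  calc (∫ p in square, (qA p * p.1 + qB p * p.2) * f p)
      = (∫ p in square, (qA p * (p.1 - etaA) + qB p * (p.2 - etaB)) * f p)
        + etaA * (∫ p in square, qA p * f p) + etaB * (∫ p in square, qB p * f p) := eq1
    _ ≤ (∫ p in square, (chiA p * (p.1 - etaA) + chiB p * (p.2 - etaB)) * f p)
        + etaA * muA + etaB * muB := by
        refine add_le_add (add_le_add hE ?_) ?_
        · exact mul_le_mul_of_nonneg_left hsupA hetaA
        · exact mul_le_mul_of_nonneg_left hsupB hetaB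
    _ = ∫ p in square,
          ((if max 0 (p.2 - etaB) < p.1 - etaA then p.1 else 0)
            + (if max 0 (p.1 - etaA) < p.2 - etaB then p.2 else 0)) * f p := by
        rw [eq2, hchiA_eq, hchiB_eq]
end
end
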